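/- arXiv:2312.03472 — 2 statements merged into one kernel-verified Lean document; each statement's English description precedes it below -/
import Mathlib

section
/- Under the same hypotheses (g Lipschitz, $X^{(1)}_t-\phi^1(t)=\int_0^t[g(X_s)-g(\phi(s))]ds$ with $X=(X^{(1)},X^{(2)})$, $\phi=(\phi^1,\phi^2)$), for every $p\ge 1$ there is a constant $\tau_2>0$ with $\|X^{(1)}-\phi^1\|_{L^p([0,1],\mathbb{R}^d)}\le \tau_2\,\|X^{(2)}-\phi^2\|_{L^p([0,1],\mathbb{R}^m)}$. -/
/-!
With `e = X₁ - φ₁` and `u = X₂ - φ₂`, the Lipschitz bound turns the integral equation into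
`‖e t‖ ≤ L ∫₀ᵗ ‖e‖ + L ∫₀¹ ‖u‖`, so Grönwall's inequality bounds `‖e‖` uniformly on `[0, 1]` by
`L eᴸ ‖u‖_{L¹}`. On the probability space `[0, 1]` the `Lᵖ` norm is at most the sup norm and,
by Jensen's inequality, at least the `L¹` norm.
-/

open MeasureTheory intervalIntegral Set Real

theorem LipschitzWith.norm_sub_le_add {E F G : Type*} [SeminormedAddCommGroup E]
    [SeminormedAddCommGroup F] [SeminormedAddCommGroup G] {L : NNReal} {g : E × F → G}
    (hg : LipschitzWith L g) (x y : E × F) :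
    ‖g x - g y‖ ≤ L * (‖x.1 - y.1‖ + ‖x.2 - y.2‖) :=
  (hg.norm_sub_le x y).trans <| by
    rw [Prod.norm_def]
    gcongr
    exact max_le (le_add_of_nonneg_right (norm_nonneg _)) (le_add_of_nonneg_left (norm_nonneg _))

theorem hasDerivWithinAt_integral_Icc {E : Type*} [NormedAddCommGroup E] [NormedSpace ℝ E]
    [CompleteSpace E] {f : ℝ → E} {a b t : ℝ} (hf : ContinuousOn f (Icc a b))
    (ht : t ∈ Icc a b) :
    HasDerivWithinAt (fun x => ∫ s in a..x, f s) (f t) (Icc a b) t := by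
  have : Fact (t ∈ Icc a b) := ⟨ht⟩
  exact integral_hasDerivWithinAt_right
    ((hf.mono (Icc_subset_Icc_right ht.2)).intervalIntegrable_of_Icc ht.1)
    (hf.stronglyMeasurableAtFilter_nhdsWithin measurableSet_Icc t) (hf t ht)

theorem le_mul_exp_of_le_mul_integral_add {w : ℝ → ℝ} {a b K ε : ℝ} (hK : 0 ≤ K)
    (hw : ContinuousOn w (Icc a b)) (h : ∀ t ∈ Icc a b, w t ≤ K * (∫ s in a..t, w s) + ε) :
    ∀ t ∈ Icc a b, w t ≤ ε * exp (K * (t - a)) := by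
  have hderiv := fun t (ht : t ∈ Icc a b) => hasDerivWithinAt_integral_Icc hw ht
  have hgronwall := le_gronwallBound_of_liminf_deriv_right_le (δ := 0)
    (fun t ht => (hderiv t ht).continuousWithinAt)
    (fun t ht _ hr => ((hderiv t (Ico_subset_Icc_self ht)).mono_of_mem_nhdsWithin
      (Icc_mem_nhdsGE_of_mem ht)).liminf_right_slope_le hr)
    (by simp) (fun t ht => h t (Ico_subset_Icc_self ht))
  intro t ht
  calc w t ≤ K * (∫ s in a..t, w s) + ε := h t ht
    _ ≤ K * gronwallBound 0 K ε (t - a) + ε := by gcongr; exact hgronwall t ht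
    _ = ε * exp (K * (t - a)) := by
      rcases hK.eq_or_lt with rfl | hK
      · simp [gronwallBound_K0]
      · rw [gronwallBound_of_K_ne_0 hK.ne']
        field_simp
        ring

section Probability

variable {α : Type*} [MeasurableSpace α] {μ : Measure α} [IsProbabilityMeasure μ] {f : α → ℝ}
  {p : ℝ}

theorem integral_le_rpow_integral_rpow (hp : 1 ≤ p) (hf0 : 0 ≤ᵐ[μ] f) (hf : Integrable f μ)
    (hfp : Integrable (fun x => f x ^ p) μ) :
    ∫ x, f x ∂μ ≤ (∫ x, f x ^ p ∂μ) ^ (1 / p) := by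
  have hjensen : (∫ x, f x ∂μ) ^ p ≤ ∫ x, f x ^ p ∂μ :=
    (convexOn_rpow hp).map_integral_le (continuousOn_id.rpow_const fun _ _ => Or.inr (by linarith))
      isClosed_Ici hf0 hf hfp
  calc ∫ x, f x ∂μ = ((∫ x, f x ∂μ) ^ p) ^ (1 / p) := by
        rw [one_div, rpow_rpow_inv (integral_nonneg_of_ae hf0) (by linarith)]
    _ ≤ (∫ x, f x ^ p ∂μ) ^ (1 / p) :=
        rpow_le_rpow (rpow_nonneg (integral_nonneg_of_ae hf0) p) hjensen (by positivity)

theorem rpow_integral_rpow_le {M : ℝ} (hp : 0 < p) (hM : 0 ≤ M) (hf0 : 0 ≤ᵐ[μ] f)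
    (hfM : ∀ᵐ x ∂μ, f x ≤ M) : (∫ x, f x ^ p ∂μ) ^ (1 / p) ≤ M := by
  have hint : ∫ x, f x ^ p ∂μ ≤ M ^ p := by
    simpa using integral_mono_of_nonneg (hf0.mono fun x hx => rpow_nonneg hx p)
      (integrable_const (M ^ p)) (hf0.and hfM |>.mono fun x hx => rpow_le_rpow hx.1 hx.2 hp.le)
  calc (∫ x, f x ^ p ∂μ) ^ (1 / p) ≤ (M ^ p) ^ (1 / p) :=
        rpow_le_rpow (integral_nonneg_of_ae (hf0.mono fun x hx => rpow_nonneg hx p)) hint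
          (by positivity)
    _ = M := by rw [one_div, rpow_rpow_inv hM hp.ne']

end Probability

theorem norm_sub_le_of_eq_integral_lipschitz {E F : Type*} [NormedAddCommGroup E]
    [NormedSpace ℝ E] [NormedAddCommGroup F] {L : NNReal} {g : E × F → E} {a b : ℝ}
    {x₁ y₁ : ℝ → E} {x₂ y₂ : ℝ → F} (hg : LipschitzWith L g)
    (hx₁ : ContinuousOn x₁ (Icc a b)) (hx₂ : ContinuousOn x₂ (Icc a b))
    (hy₁ : ContinuousOn y₁ (Icc a b)) (hy₂ : ContinuousOn y₂ (Icc a b))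
    (heq : ∀ t ∈ Icc a b, x₁ t - y₁ t = ∫ s in a..t, (g (x₁ s, x₂ s) - g (y₁ s, y₂ s)))
    {t : ℝ} (ht : t ∈ Icc a b) :
    ‖x₁ t - y₁ t‖ ≤ L * (∫ s in a..t, ‖x₁ s - y₁ s‖) + L * ∫ s in a..b, ‖x₂ s - y₂ s‖ := by
  have hint : ∀ {w : ℝ → ℝ}, ContinuousOn w (Icc a b) → IntervalIntegrable w volume a t :=
    fun hw => (hw.mono (Icc_subset_Icc_right ht.2)).intervalIntegrable_of_Icc ht.1
  have he : IntervalIntegrable (fun s => L * ‖x₁ s - y₁ s‖) volume a t :=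
    (hint (hx₁.sub hy₁).norm).const_mul _
  have hu : IntervalIntegrable (fun s => L * ‖x₂ s - y₂ s‖) volume a t :=
    (hint (hx₂.sub hy₂).norm).const_mul _
  have hgxy := hint ((hg.continuous.comp_continuousOn (hx₁.prodMk hx₂)).sub
    (hg.continuous.comp_continuousOn (hy₁.prodMk hy₂))).norm
  calc ‖x₁ t - y₁ t‖ ≤ ∫ s in a..t, ‖g (x₁ s, x₂ s) - g (y₁ s, y₂ s)‖ := by
        rw [heq t ht]; exact norm_integral_le_integral_norm ht.1
    _ ≤ ∫ s in a..t, (L * ‖x₁ s - y₁ s‖ + L * ‖x₂ s - y₂ s‖) :=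
        integral_mono ht.1 hgxy (he.add hu) fun s => by
          simpa only [mul_add] using hg.norm_sub_le_add (x₁ s, x₂ s) (y₁ s, y₂ s)
    _ = L * (∫ s in a..t, ‖x₁ s - y₁ s‖) + L * ∫ s in a..t, ‖x₂ s - y₂ s‖ := by
        rw [integral_add he hu, intervalIntegral.integral_const_mul,
          intervalIntegral.integral_const_mul]
    _ ≤ L * (∫ s in a..t, ‖x₁ s - y₁ s‖) + L * ∫ s in a..b, ‖x₂ s - y₂ s‖ := by
        gcongr
        exact integral_mono_interval le_rfl ht.1 ht.2 (ae_of_all _ fun _ => norm_nonneg _)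
          ((hx₂.sub hy₂).norm.intervalIntegrable_of_Icc (ht.1.trans ht.2))

/-- **(H4) for `Lᵖ`-norms.** If `g` is Lipschitz and
`X⁽¹⁾ₜ - φ¹(t) = ∫₀ᵗ [g(Xₛ) - g(φ(s))] ds` with `X = (X⁽¹⁾, X⁽²⁾)`, `φ = (φ¹, φ²)`, then
for every `p ≥ 1` there is a constant `τ₂ > 0` with
`‖X⁽¹⁾ - φ¹‖_{Lᵖ([0,1])} ≤ τ₂ ‖X⁽²⁾ - φ²‖_{Lᵖ([0,1])}`. -/
theorem Lp_norm_controllability (d m : ℕ) (p : ℝ) (hp : 1 ≤ p) (L : NNReal) :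
    ∃ τ₂ : ℝ, 0 < τ₂ ∧
      ∀ (g : EuclideanSpace ℝ (Fin d) × EuclideanSpace ℝ (Fin m) → EuclideanSpace ℝ (Fin d))
        (X₁ φ₁ : ℝ → EuclideanSpace ℝ (Fin d)) (X₂ φ₂ : ℝ → EuclideanSpace ℝ (Fin m)),
        LipschitzWith L g →
        ContinuousOn X₁ (Icc 0 1) → ContinuousOn X₂ (Icc 0 1) →
        ContinuousOn φ₁ (Icc 0 1) → ContinuousOn φ₂ (Icc 0 1) →
        (∀ t ∈ Icc (0:ℝ) 1,
          X₁ t - φ₁ t = ∫ s in (0:ℝ)..t, (g (X₁ s, X₂ s) - g (φ₁ s, φ₂ s))) →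
        (∫ t in (0:ℝ)..1, ‖X₁ t - φ₁ t‖ ^ p) ^ (1 / p) ≤
          τ₂ * (∫ t in (0:ℝ)..1, ‖X₂ t - φ₂ t‖ ^ p) ^ (1 / p) := by
  refine ⟨(L + 1) * exp L, by positivity, ?_⟩
  intro g X₁ φ₁ X₂ φ₂ hg hX₁ hX₂ hφ₁ hφ₂ heq
  set I := ∫ t in (0:ℝ)..1, ‖X₂ t - φ₂ t‖
  have hI : 0 ≤ I := integral_nonneg zero_le_one fun _ _ => norm_nonneg _
  have hpointwise : ∀ t ∈ Icc (0:ℝ) 1, ‖X₁ t - φ₁ t‖ ≤ (L + 1) * exp L * I := fun t ht =>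
    calc ‖X₁ t - φ₁ t‖ ≤ L * I * exp (L * (t - 0)) :=
          le_mul_exp_of_le_mul_integral_add L.coe_nonneg (hX₁.sub hφ₁).norm
            (fun s hs => norm_sub_le_of_eq_integral_lipschitz hg hX₁ hX₂ hφ₁ hφ₂ heq hs) t ht
      _ ≤ (L + 1) * exp L * I := by
          rw [sub_zero, mul_right_comm]
          gcongr
          · linarith
          · exact mul_le_of_le_one_right L.coe_nonneg ht.2
  have : IsProbabilityMeasure (volume.restrict (Ioc (0:ℝ) 1)) := ⟨by simp⟩
  have hu := (hX₂.sub hφ₂).norm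
  have hjensen : I ≤ (∫ t in (0:ℝ)..1, ‖X₂ t - φ₂ t‖ ^ p) ^ (1 / p) := by
    simp only [I, integral_of_le zero_le_one]
    exact integral_le_rpow_integral_rpow hp (ae_of_all _ fun _ => norm_nonneg _)
      (hu.integrableOn_Icc.mono_set Ioc_subset_Icc_self)
      ((hu.rpow_const fun _ _ => Or.inr (by linarith)).integrableOn_Icc.mono_set
        Ioc_subset_Icc_self)
  calc (∫ t in (0:ℝ)..1, ‖X₁ t - φ₁ t‖ ^ p) ^ (1 / p) ≤ (L + 1) * exp L * I := by
        rw [integral_of_le zero_le_one]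
        exact rpow_integral_rpow_le (by linarith) (by positivity)
          (ae_of_all _ fun _ => norm_nonneg _) (ae_restrict_of_forall_mem measurableSet_Ioc
            fun t ht => hpointwise t (Ioc_subset_Icc_self ht))
    _ ≤ (L + 1) * exp L * (∫ t in (0:ℝ)..1, ‖X₂ t - φ₂ t‖ ^ p) ^ (1 / p) := by gcongr
end

section
/- Suppose random variables $J_\varepsilon$ and events $A_\varepsilon$ with $\mathbb{P}(A_\varepsilon)\ge \exp(-C_3/\varepsilon^q)$ satisfy $\mathbb{P}(\{|J_\varepsilon|>\xi\}\cap A_\varepsilon)\le \exp(-\xi^2/(2K\varepsilon^{r}))$ for all $\xi>0$, with constants $C_3,K>0$ and $0<q<r$. Then $\limsup_{\varepsilon\to 0} E[\exp(J_\varepsilon)\mid A_\varepsilon]\le 1$. -/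
open MeasureTheory Filter Set Topology

/-! By the layer-cake formula, `∫_A e^J ≤ e^δ ℙ(A) + ∫_{e^δ}^∞ ℙ(e^J > t, A) dt`, and for
`log t > δ` the Gaussian tail gives `ℙ(e^J > t, A) ≤ exp (-(log t)² / c) ≤ t^(-δ/c)`, where
`c = 2Kε^r`. Integrating, `E[e^J ∣ A] ≤ e^δ + e^(δ (1 - δ/c)) / ℙ(A) ≤ e^δ + e^(δ - δ²/c + C₃/ε^q)`.
Take `δ = ε^s` with `0 < 2s < r - q`: then `δ → 0`, while `δ²/c = ε^(2s-r)/(2K)` dominates both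
`δ` and `C₃/ε^q`, so the bound tends to `1`. -/

section LayerCake

variable {α : Type*} [MeasurableSpace α] {μ : Measure α}

lemma lintegral_ofReal_le_mul_measure_univ_add_lintegral_Ioi {f : α → ℝ} (hf : 0 ≤ᵐ[μ] f)
    (hfm : AEMeasurable f μ) {a : ℝ} (ha : 0 ≤ a) :
    ∫⁻ ω, ENNReal.ofReal (f ω) ∂μ ≤
      ENNReal.ofReal a * μ univ + ∫⁻ t in Ioi a, μ {ω | t < f ω} := by
  rw [lintegral_eq_lintegral_meas_lt μ hf hfm, ← Ioc_union_Ioi_eq_Ioi ha,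
    lintegral_union measurableSet_Ioi Ioc_disjoint_Ioi_same]
  gcongr
  calc ∫⁻ t in Ioc 0 a, μ {ω | t < f ω} ≤ ∫⁻ _ in Ioc 0 a, μ univ :=
        lintegral_mono fun _ ↦ measure_mono (subset_univ _)
    _ = ENNReal.ofReal a * μ univ := by
        rw [setLIntegral_const, Real.volume_Ioc, sub_zero, mul_comm]

end LayerCake

lemma lintegral_Ioi_rpow_neg {a p : ℝ} (ha : 0 < a) (hp : 1 < p) :
    ∫⁻ t in Ioi a, ENNReal.ofReal (t ^ (-p)) = ENNReal.ofReal (a ^ (1 - p) / (p - 1)) := by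
  rw [← ofReal_integral_eq_lintegral_ofReal (integrableOn_Ioi_rpow_of_lt (by linarith) ha)
      ((ae_restrict_iff' measurableSet_Ioi).mpr
        (ae_of_all _ fun t ht ↦ Real.rpow_nonneg (ha.trans ht).le _)),
    integral_Ioi_rpow_of_lt (by linarith) ha]
  congr 1
  rw [show -p + 1 = 1 - p by ring, neg_div, ← div_neg, neg_sub]

lemma exp_neg_sq_log_div_le_rpow_neg {t c δ : ℝ} (ht : 0 < t) (hc : 0 < c) (hδ : 0 ≤ δ)
    (hδt : δ ≤ Real.log t) :
    Real.exp (-Real.log t ^ 2 / c) ≤ t ^ (-(δ / c)) := by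
  rw [Real.rpow_def_of_pos ht, Real.exp_le_exp, mul_neg, ← mul_div_assoc, neg_div]
  gcongr
  nlinarith

section GaussianTail

variable {Ω : Type*} [MeasurableSpace Ω] {μ : Measure Ω} {J : Ω → ℝ} {A : Set Ω} {c δ : ℝ}

lemma measure_restrict_exp_gt_le_rpow_neg (hJ : Measurable J) (hc : 0 < c) (hδ : 0 < δ)
    (htail : ∀ ξ : ℝ, 0 < ξ → μ ({ω | ξ < |J ω|} ∩ A) ≤ ENNReal.ofReal (Real.exp (-ξ ^ 2 / c)))
    {t : ℝ} (ht : Real.exp δ < t) :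
    μ.restrict A {ω | t < Real.exp (J ω)} ≤ ENNReal.ofReal (t ^ (-(δ / c))) := by
  have ht0 : 0 < t := (Real.exp_pos δ).trans ht
  have hδt : δ < Real.log t := (Real.lt_log_iff_exp_lt ht0).mpr ht
  have hsub : {ω | t < Real.exp (J ω)} ∩ A ⊆ {ω | Real.log t < |J ω|} ∩ A :=
    fun ω ⟨hω, hωA⟩ ↦ ⟨((Real.log_lt_iff_lt_exp ht0).mpr hω).trans_le (le_abs_self _), hωA⟩
  rw [Measure.restrict_apply (measurableSet_lt measurable_const hJ.exp)]
  calc μ ({ω | t < Real.exp (J ω)} ∩ A) ≤ μ ({ω | Real.log t < |J ω|} ∩ A) := measure_mono hsub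
    _ ≤ ENNReal.ofReal (Real.exp (-Real.log t ^ 2 / c)) := htail _ (hδ.trans hδt)
    _ ≤ ENNReal.ofReal (t ^ (-(δ / c))) :=
        ENNReal.ofReal_le_ofReal (exp_neg_sq_log_div_le_rpow_neg ht0 hc hδ.le hδt.le)

lemma setIntegral_exp_le_of_tail_le (hA : μ A ≠ ⊤) (hJ : Measurable J) (hc : 0 < c)
    (hδ : 0 < δ) (hp : 1 < δ / c)
    (htail : ∀ ξ : ℝ, 0 < ξ → μ ({ω | ξ < |J ω|} ∩ A) ≤ ENNReal.ofReal (Real.exp (-ξ ^ 2 / c))) :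
    ∫ ω in A, Real.exp (J ω) ∂μ ≤
      Real.exp δ * (μ A).toReal + Real.exp (δ * (1 - δ / c)) / (δ / c - 1) := by
  have hexp_nn : 0 ≤ᵐ[μ.restrict A] fun ω ↦ Real.exp (J ω) :=
    ae_of_all _ fun ω ↦ (Real.exp_pos _).le
  rw [integral_eq_lintegral_of_nonneg_ae hexp_nn hJ.exp.aestronglyMeasurable]
  refine ENNReal.toReal_le_of_le_ofReal (by positivity) ?_
  calc ∫⁻ ω, ENNReal.ofReal (Real.exp (J ω)) ∂μ.restrict A
      ≤ ENNReal.ofReal (Real.exp δ) * μ.restrict A univ +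
          ∫⁻ t in Ioi (Real.exp δ), μ.restrict A {ω | t < Real.exp (J ω)} :=
        lintegral_ofReal_le_mul_measure_univ_add_lintegral_Ioi hexp_nn
          hJ.exp.aemeasurable (Real.exp_pos δ).le
    _ ≤ ENNReal.ofReal (Real.exp δ) * μ A +
          ∫⁻ t in Ioi (Real.exp δ), ENNReal.ofReal (t ^ (-(δ / c))) := by
        rw [Measure.restrict_apply_univ]
        exact add_le_add le_rfl (setLIntegral_mono' measurableSet_Ioi
          fun _ ht ↦ measure_restrict_exp_gt_le_rpow_neg hJ hc hδ htail ht)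
    _ = ENNReal.ofReal (Real.exp δ * (μ A).toReal +
          Real.exp (δ * (1 - δ / c)) / (δ / c - 1)) := by
        rw [lintegral_Ioi_rpow_neg (Real.exp_pos δ) hp, ← Real.exp_mul,
          ENNReal.ofReal_add (by positivity) (by positivity),
          ENNReal.ofReal_mul (Real.exp_pos δ).le, ENNReal.ofReal_toReal hA]

end GaussianTail

lemma tendsto_rpow_nhdsGT_zero {a : ℝ} (ha : 0 < a) :
    Tendsto (fun x : ℝ ↦ x ^ a) (𝓝[>] 0) (𝓝 0) := by
  simpa [Real.zero_rpow ha.ne'] using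
    (Real.continuousAt_rpow_const 0 a (Or.inr ha.le)).tendsto.mono_left nhdsWithin_le_nhds

lemma tendsto_rpow_div_const_mul_rpow_atTop {s r k : ℝ} (hk : 0 < k) (hsr : s < r) :
    Tendsto (fun x : ℝ ↦ x ^ s / (k * x ^ r)) (𝓝[>] 0) atTop := by
  refine ((tendsto_rpow_neg_nhdsGT_zero (sub_neg.mpr hsr)).atTop_div_const hk).congr' ?_
  filter_upwards [self_mem_nhdsWithin] with x (hx : 0 < x)
  rw [Real.rpow_sub hx, div_div, mul_comm]

lemma tendsto_rpow_mul_one_sub_add_div_rpow_atBot {s r q k : ℝ} (hk : 0 < k) (hs : 0 < s)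
    (hq : 0 < q) (hsqr : 2 * s < r - q) (C : ℝ) :
    Tendsto (fun x : ℝ ↦ x ^ s * (1 - x ^ s / (k * x ^ r)) + C / x ^ q) (𝓝[>] 0) atBot := by
  have hlim : Tendsto (fun x : ℝ ↦ x ^ (r - s) - 1 / k + C * x ^ (r - 2 * s - q)) (𝓝[>] 0)
      (𝓝 (-(1 / k))) := by
    simpa using ((tendsto_rpow_nhdsGT_zero (by linarith : 0 < r - s)).sub_const (1 / k)).add
      ((tendsto_rpow_nhdsGT_zero (by linarith : 0 < r - 2 * s - q)).const_mul C)
  refine ((tendsto_rpow_neg_nhdsGT_zero (by linarith : 2 * s - r < 0)).atTop_mul_neg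
    (by simpa using hk) hlim).congr' ?_
  filter_upwards [self_mem_nhdsWithin] with x (hx : 0 < x)
  have h₁ : x ^ (2 * s - r) = x ^ s * x ^ s / x ^ r := by
    rw [two_mul, Real.rpow_sub hx, Real.rpow_add hx]
  have h₂ : x ^ (r - 2 * s - q) = x ^ r / x ^ s / x ^ s / x ^ q := by
    rw [two_mul, ← sub_sub, Real.rpow_sub hx, Real.rpow_sub hx, Real.rpow_sub hx]
  have := Real.rpow_pos_of_pos hx s
  have := Real.rpow_pos_of_pos hx r
  have := Real.rpow_pos_of_pos hx q
  rw [h₁, h₂, Real.rpow_sub hx]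
  field_simp

lemma div_measure_setIntegral_exp_le {Ω : Type*} [MeasurableSpace Ω] {μ : Measure Ω}
    [IsFiniteMeasure μ] {J : Ω → ℝ} {A : Set Ω} {c δ L : ℝ} (hJ : Measurable J) (hc : 0 < c)
    (hδ : 0 < δ) (hp : 2 ≤ δ / c)
    (htail : ∀ ξ : ℝ, 0 < ξ → μ ({ω | ξ < |J ω|} ∩ A) ≤ ENNReal.ofReal (Real.exp (-ξ ^ 2 / c)))
    (hlow : ENNReal.ofReal (Real.exp (-L)) ≤ μ A) :
    (∫ ω in A, Real.exp (J ω) ∂μ) / (μ A).toReal ≤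
      Real.exp δ + Real.exp (δ * (1 - δ / c) + L) := by
  have hμA : Real.exp (-L) ≤ (μ A).toReal :=
    (ENNReal.ofReal_le_iff_le_toReal (measure_ne_top μ A)).mp hlow
  have hμA_pos : 0 < (μ A).toReal := (Real.exp_pos _).trans_le hμA
  rw [div_le_iff₀ hμA_pos]
  calc ∫ ω in A, Real.exp (J ω) ∂μ
      ≤ Real.exp δ * (μ A).toReal + Real.exp (δ * (1 - δ / c)) / (δ / c - 1) :=
        setIntegral_exp_le_of_tail_le (measure_ne_top μ A) hJ hc hδ (by linarith) htail
    _ ≤ Real.exp δ * (μ A).toReal + Real.exp (δ * (1 - δ / c) + L) * Real.exp (-L) := by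
        rw [← Real.exp_add, add_neg_cancel_right]
        gcongr
        exact div_le_self (Real.exp_nonneg _) (by linarith)
    _ ≤ (Real.exp δ + Real.exp (δ * (1 - δ / c) + L)) * (μ A).toReal := by
        rw [add_mul]
        gcongr

lemma tendsto_exp_rpow_add_exp_nhds_one {s r q k : ℝ} (hk : 0 < k) (hs : 0 < s)
    (hq : 0 < q) (hsqr : 2 * s < r - q) (C : ℝ) :
    Tendsto (fun x : ℝ ↦ Real.exp (x ^ s) +
        Real.exp (x ^ s * (1 - x ^ s / (k * x ^ r)) + C / x ^ q)) (𝓝[>] 0) (𝓝 1) := by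
  simpa using ((Real.continuous_exp.tendsto 0).comp (tendsto_rpow_nhdsGT_zero hs)).add
    (Real.tendsto_exp_atBot.comp (tendsto_rpow_mul_one_sub_add_div_rpow_atBot hk hs hq hsqr C))

theorem small_ball_remainder_limsup_general {Ω : Type*} [MeasurableSpace Ω]
    (P : Measure Ω) [IsProbabilityMeasure P]
    (J : ℝ → Ω → ℝ) (A : ℝ → Set Ω) (C₃ K q r : ℝ)
    (hK : 0 < K) (hq : 0 < q) (hqr : q < r)
    (hmeasJ : ∀ ε, 0 < ε → Measurable (J ε))
    (hlow : ∀ ε : ℝ, 0 < ε → ENNReal.ofReal (Real.exp (-C₃ / ε ^ q)) ≤ P (A ε))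
    (htail : ∀ ε : ℝ, 0 < ε → ∀ ξ : ℝ, 0 < ξ →
      P ({ω | ξ < |J ε ω|} ∩ A ε) ≤ ENNReal.ofReal (Real.exp (-ξ ^ 2 / (2 * K * ε ^ r)))) :
    Filter.limsup
      (fun ε => (∫ ω in A ε, Real.exp (J ε ω) ∂P) / (P (A ε)).toReal)
      (nhdsWithin 0 (Set.Ioi 0)) ≤ 1 := by
  obtain ⟨s, hs, hsqr⟩ : ∃ s : ℝ, 0 < s ∧ 2 * s < r - q := ⟨(r - q) / 4, by linarith, by linarith⟩
  have hk : 0 < 2 * K := by positivity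
  have hB := tendsto_exp_rpow_add_exp_nhds_one (r := r) hk hs hq hsqr C₃
  have hbound : ∀ᶠ ε in 𝓝[>] 0, (∫ ω in A ε, Real.exp (J ε ω) ∂P) / (P (A ε)).toReal ≤
      Real.exp (ε ^ s) + Real.exp (ε ^ s * (1 - ε ^ s / (2 * K * ε ^ r)) + C₃ / ε ^ q) := by
    filter_upwards [self_mem_nhdsWithin,
      (tendsto_rpow_div_const_mul_rpow_atTop hk (by linarith : s < r)).eventually_ge_atTop 2]
      with ε (hε : 0 < ε) h2
    exact div_measure_setIntegral_exp_le (hmeasJ ε hε) (by positivity)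
      (Real.rpow_pos_of_pos hε s) h2 (htail ε hε) (by rw [← neg_div]; exact hlow ε hε)
  have hcobdd : IsCoboundedUnder (· ≤ ·) (𝓝[>] 0)
      fun ε ↦ (∫ ω in A ε, Real.exp (J ε ω) ∂P) / (P (A ε)).toReal :=
    isCoboundedUnder_le_of_le _ fun ε ↦
      div_nonneg (integral_nonneg fun _ ↦ (Real.exp_pos _).le) ENNReal.toReal_nonneg
  exact (limsup_le_limsup hbound hcobdd hB.isBoundedUnder_le).trans hB.limsup_eq.le

/-- **Small-ball remainder estimate.** Suppose random variables `J ε` and events `A ε`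
with `ℙ(A ε) ≥ exp(-C₃/ε^q)` satisfy the tail bound
`ℙ({|J ε| > ξ} ∩ A ε) ≤ exp(-ξ²/(2 K ε^r))` for all `ξ > 0`, where `C₃, K > 0` and
`0 < q < r`. Then `limsup_{ε → 0} E[exp (J ε) ∣ A ε] ≤ 1`, with
`E[· ∣ A] = E[· 1_A]/ℙ(A)`. -/
theorem small_ball_remainder_limsup {Ω : Type*} [MeasurableSpace Ω]
    (P : Measure Ω) [IsProbabilityMeasure P]
    (J : ℝ → Ω → ℝ) (A : ℝ → Set Ω) (C₃ K q r : ℝ)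
    (hC₃ : 0 < C₃) (hK : 0 < K) (hq : 0 < q) (hqr : q < r)
    (hmeasJ : ∀ ε, 0 < ε → Measurable (J ε))
    (hmeasA : ∀ ε, 0 < ε → MeasurableSet (A ε))
    (hlow : ∀ ε : ℝ, 0 < ε → ENNReal.ofReal (Real.exp (-C₃ / ε ^ q)) ≤ P (A ε))
    (htail : ∀ ε : ℝ, 0 < ε → ∀ ξ : ℝ, 0 < ξ →
      P ({ω | ξ < |J ε ω|} ∩ A ε) ≤ ENNReal.ofReal (Real.exp (-ξ ^ 2 / (2 * K * ε ^ r)))) :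
    Filter.limsup
      (fun ε => (∫ ω in A ε, Real.exp (J ε ω) ∂P) / (P (A ε)).toReal)
      (nhdsWithin 0 (Set.Ioi 0)) ≤ 1 :=
  small_ball_remainder_limsup_general P J A C₃ K q r hK hq hqr hmeasJ hlow htail
end
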